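/- arXiv:1803.00440 — 6 statements merged into one kernel-verified Lean document; each statement's English description precedes it below -/
import Mathlib

section
/- Let g be a rational function on ℂ with no poles in the open unit disk, having a pole at t = 1 whose order r ≥ 1 is greater than or equal to the order of every other pole of g, and write g(t) = Σ_{n≥0} g_n tⁿ for |t| < 1. Let p and q be polynomials with complex coefficients with q(1) ≠ 0, and let s_n and d_n denote the Taylor coefficients at 0 of s(t) = p(t)g(t) and d(t) = q(t)g(t). Then both limits lim_{t→1⁻} s(t)/d(t) (along real t < 1) and lim_{N→∞} (Σ_{n≤N} s_n)/(Σ_{n≤N} d_n) exist and are equal to p(1)/q(1). -/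
/-!
The generating function of the partial sums `S_N = ∑_{n ≤ N} s_n` is `p A / ((1 - t) B)`.
Write `B = (1 - t)^r E` with `E(1) ≠ 0`. Subtracting the principal part `c / (1 - t)^(r+1)`,
`c = p(1) A(1) / E(1)`, leaves a rational function `G / B` whose poles all lie on or outside
the unit circle and have order at most `r`; by partial fractions its Taylor coefficients are
`O(N^(r-1))`. The principal part contributes `c · binom(N + r, r) ≍ N^r / r!`, so
`S_N / binom(N + r, r) → c`, and likewise for `d` with `q` in place of `p`. Coprimality gives
`A(1) ≠ 0`, so the ratio of the two limits is `p(1) / q(1)`. Along `t → 1⁻` the factor `A / B`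
simply cancels.
-/

open Filter Topology Polynomial Asymptotics

section UnitDisk

variable {a b : ℕ → ℂ} {f : ℂ → ℂ}

theorem hasFPowerSeriesOnBall_ofScalars_of_hasSum
    (h : ∀ z : ℂ, ‖z‖ < 1 → HasSum (fun n => a n * z ^ n) (f z)) :
    HasFPowerSeriesOnBall f (FormalMultilinearSeries.ofScalars ℂ a) 0 1 where
  r_le := by
    refine ENNReal.le_of_forall_nnreal_lt fun ρ hρ => ?_
    refine FormalMultilinearSeries.le_radius_of_tendsto _ (l := 0) ?_
    have hρ' : ‖((ρ : ℝ) : ℂ)‖ < 1 := by simpa using hρ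
    simpa [FormalMultilinearSeries.ofScalars_norm] using
      (h _ hρ').summable.tendsto_atTop_zero.norm
  r_pos := one_pos
  hasSum {z} hz := by
    have hz' : ‖z‖ < 1 := by simpa [enorm_eq_nnnorm, ← coe_nnnorm] using hz
    simpa [FormalMultilinearSeries.ofScalars_apply_eq, mul_comm] using h z hz'

theorem summable_norm_mul_pow_of_hasSum
    (h : ∀ z : ℂ, ‖z‖ < 1 → HasSum (fun n => a n * z ^ n) (f z)) {z : ℂ} (hz : ‖z‖ < 1) :
    Summable fun n => ‖a n * z ^ n‖ := by
  have hr := (hasFPowerSeriesOnBall_ofScalars_of_hasSum h).r_le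
  have := (FormalMultilinearSeries.ofScalars ℂ a).summable_norm_mul_pow (r := ‖z‖₊)
    (lt_of_lt_of_le (ENNReal.coe_lt_one_iff.mpr hz) hr)
  simpa [FormalMultilinearSeries.ofScalars_norm] using this

theorem eq_of_hasSum_mul_pow
    (ha : ∀ z : ℂ, ‖z‖ < 1 → HasSum (fun n => a n * z ^ n) (f z))
    (hb : ∀ z : ℂ, ‖z‖ < 1 → HasSum (fun n => b n * z ^ n) (f z)) : a = b :=
  FormalMultilinearSeries.ofScalars_series_injective ℂ ℂ
    ((hasFPowerSeriesOnBall_ofScalars_of_hasSum ha).hasFPowerSeriesAt.eq_formalMultilinearSeries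
      (hasFPowerSeriesOnBall_ofScalars_of_hasSum hb).hasFPowerSeriesAt)

theorem hasSum_sum_range_mul_pow
    (h : ∀ z : ℂ, ‖z‖ < 1 → HasSum (fun n => a n * z ^ n) (f z)) {z : ℂ} (hz : ‖z‖ < 1) :
    HasSum (fun N => (∑ n ∈ Finset.range (N + 1), a n) * z ^ N) (f z * (1 - z)⁻¹) := by
  have hgeom : Summable fun n => ‖z ^ n‖ := by
    simpa [norm_pow] using summable_geometric_of_lt_one (norm_nonneg z) hz
  have := hasSum_sum_range_mul_of_summable_norm (summable_norm_mul_pow_of_hasSum h hz) hgeom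
  rw [(h z hz).tsum_eq, tsum_geometric_of_norm_lt_one hz] at this
  refine this.congr_fun fun N => ?_
  rw [Finset.sum_mul]
  refine Finset.sum_congr rfl fun n hn => ?_
  rw [mul_assoc, ← pow_add, Nat.add_sub_cancel' (Finset.mem_range_succ_iff.mp hn)]

end UnitDisk

theorem hasSum_choose_mul_inv_pow {𝕜 : Type*} [NormedField 𝕜] [CompleteSpace 𝕜] {z₀ z : 𝕜}
    (hz : ‖z‖ < ‖z₀‖) (m : ℕ) :
    HasSum (fun n => ((n + m).choose m : 𝕜) * z₀⁻¹ ^ (n + m + 1) * z ^ n)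
      ((z₀ - z) ^ (m + 1))⁻¹ := by
  have hz₀ : z₀ ≠ 0 := norm_pos_iff.mp ((norm_nonneg z).trans_lt hz)
  have hq : ‖z / z₀‖ < 1 := by rwa [norm_div, div_lt_one ((norm_nonneg z).trans_lt hz)]
  have hsplit : z₀ - z = z₀ * (1 - z / z₀) := by field_simp
  rw [hsplit, mul_pow, mul_inv, ← inv_pow, ← one_div ((1 - z / z₀) ^ (m + 1))]
  refine ((hasSum_choose_mul_geometric_of_norm_lt_one m hq).mul_left _).congr_fun fun n => ?_
  rw [div_eq_mul_inv, mul_pow]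
  ring

theorem isBigO_choose_add (m : ℕ) :
    (fun n : ℕ => ((n + m).choose m : ℝ)) =O[atTop] fun n => (n : ℝ) ^ m := by
  refine IsBigO.of_bound (2 ^ m) ((eventually_ge_atTop 1).mono fun n hn => ?_)
  have hn' : (n : ℝ) + 1 ≤ 2 * n := by
    have : (1 : ℝ) ≤ n := by exact_mod_cast hn
    linarith
  simp only [Real.norm_natCast, norm_pow]
  calc ((n + m).choose m : ℝ) ≤ ((n + 1) ^ m : ℕ) := by
        exact_mod_cast Nat.choose_add_le_add_one_pow n m
    _ ≤ (2 * n) ^ m := by push_cast; gcongr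
    _ = 2 ^ m * (n : ℝ) ^ m := mul_pow _ _ _

theorem isBigO_pow_choose_add (m : ℕ) :
    (fun n : ℕ => (n : ℝ) ^ m) =O[atTop] fun n => ((n + m).choose m : ℝ) := by
  refine IsBigO.of_bound (m.factorial : ℝ) (Eventually.of_forall fun n => ?_)
  have h := Nat.pow_le_choose (α := ℝ) m (n + m)
  rw [Nat.add_right_comm, Nat.add_sub_cancel, div_le_iff₀' (by positivity)] at h
  simp only [norm_pow, Real.norm_natCast]
  calc (n : ℝ) ^ m ≤ ((n + 1 : ℕ) : ℝ) ^ m := by gcongr; exact_mod_cast n.le_succ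
    _ ≤ _ := h

theorem isBigO_natCast_pow_of_le {m M : ℕ} (h : m ≤ M) :
    (fun n : ℕ => (n : ℝ) ^ m) =O[atTop] fun n => (n : ℝ) ^ M :=
  IsBigO.of_bound 1 ((eventually_ge_atTop 1).mono fun n hn => by
    simpa using pow_le_pow_right₀ (by exact_mod_cast hn : (1 : ℝ) ≤ n) h)

theorem exists_eq_sub_pow_rootMultiplicity_mul {R : Type*} [CommRing R] [IsDomain R] {D : R[X]}
    (hD : D ≠ 0) (z₀ : R) :
    ∃ E : R[X], D = (C z₀ - X) ^ D.rootMultiplicity z₀ * E ∧ E.eval z₀ ≠ 0 := by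
  obtain ⟨E, hDE, hE⟩ := D.exists_eq_pow_rootMultiplicity_mul_and_not_dvd hD z₀
  refine ⟨(-1) ^ D.rootMultiplicity z₀ * E, ?_, ?_⟩
  · rw [← mul_assoc, ← mul_pow, mul_neg_one, neg_sub, ← hDE]
  · simpa [dvd_iff_isRoot] using hE

theorem exists_eval_div_eq_div_sub_pow_add {K : Type*} [Field K] (P : K[X]) {E : K[X]} {z₀ : K}
    (hE : E.eval z₀ ≠ 0) (m : ℕ) :
    ∃ G : K[X], ∀ z, z ≠ z₀ → E.eval z ≠ 0 →
      P.eval z / ((z₀ - z) ^ (m + 1) * E.eval z) =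
        P.eval z₀ / E.eval z₀ / (z₀ - z) ^ (m + 1) + G.eval z / ((z₀ - z) ^ m * E.eval z) := by
  set c := P.eval z₀ / E.eval z₀
  have hroot : (P - C c * E).IsRoot z₀ := by simp [c, div_mul_cancel₀ _ hE]
  obtain ⟨G, hG⟩ := dvd_iff_isRoot.mpr hroot
  refine ⟨-G, fun z hz hEz => ?_⟩
  have hPz := congrArg (eval z) hG
  simp only [eval_sub, eval_mul, eval_C, eval_X] at hPz
  have hz' : z₀ - z ≠ 0 := sub_ne_zero.mpr (Ne.symm hz)
  rw [eval_neg]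
  field_simp
  linear_combination (z₀ - z) ^ m * hPz

theorem hasSum_coeff_mul_pow {R : Type*} [CommSemiring R] [TopologicalSpace R] (P : R[X])
    (z : R) : HasSum (fun n => P.coeff n * z ^ n) (P.eval z) := by
  rw [eval_eq_sum_range]
  exact hasSum_sum_of_ne_finset_zero fun n hn => by
    rw [coeff_eq_zero_of_natDegree_lt (by simpa using hn), zero_mul]

theorem isBigO_coeff {R F : Type*} [NormedRing R] [Norm F] (P : R[X]) (g : ℕ → F) :
    (fun n => P.coeff n) =O[atTop] g :=
  (isBigO_zero g atTop).congr'
    ((eventually_gt_atTop P.natDegree).mono fun _ hn => (coeff_eq_zero_of_natDegree_lt hn).symm)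
    EventuallyEq.rfl

def CoeffsIsBigOPow (M : ℕ) (f : ℂ → ℂ) : Prop :=
  ∃ a : ℕ → ℂ, (∀ z : ℂ, ‖z‖ < 1 → HasSum (fun n => a n * z ^ n) (f z)) ∧
    a =O[atTop] fun n => (n : ℝ) ^ M

namespace CoeffsIsBigOPow

variable {m M : ℕ} {f g : ℂ → ℂ}

theorem congr (hf : CoeffsIsBigOPow M f) (hfg : ∀ z : ℂ, ‖z‖ < 1 → f z = g z) :
    CoeffsIsBigOPow M g :=
  let ⟨a, ha, haO⟩ := hf
  ⟨a, fun z hz => hfg z hz ▸ ha z hz, haO⟩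

theorem mono (hf : CoeffsIsBigOPow m f) (h : m ≤ M) : CoeffsIsBigOPow M f :=
  let ⟨a, ha, haO⟩ := hf
  ⟨a, ha, haO.trans (isBigO_natCast_pow_of_le h)⟩

theorem add (hf : CoeffsIsBigOPow M f) (hg : CoeffsIsBigOPow M g) :
    CoeffsIsBigOPow M fun z => f z + g z :=
  let ⟨a, ha, haO⟩ := hf
  let ⟨b, hb, hbO⟩ := hg
  ⟨a + b, fun z hz => ((ha z hz).add (hb z hz)).congr_fun fun _ => add_mul _ _ _, haO.add hbO⟩

theorem const_mul (c : ℂ) (hf : CoeffsIsBigOPow M f) : CoeffsIsBigOPow M fun z => c * f z :=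
  let ⟨a, ha, haO⟩ := hf
  ⟨fun n => c * a n, fun z hz => ((ha z hz).mul_left c).congr_fun fun _ => mul_assoc _ _ _,
    haO.const_mul_left c⟩

end CoeffsIsBigOPow

theorem coeffsIsBigOPow_eval (M : ℕ) (P : ℂ[X]) : CoeffsIsBigOPow M P.eval :=
  ⟨P.coeff, fun z _ => hasSum_coeff_mul_pow P z, isBigO_coeff P _⟩

theorem coeffsIsBigOPow_inv_sub_pow {z₀ : ℂ} (hz₀ : 1 ≤ ‖z₀‖) (m : ℕ) :
    CoeffsIsBigOPow m fun z => ((z₀ - z) ^ (m + 1))⁻¹ := by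
  refine ⟨fun n => ((n + m).choose m : ℂ) * z₀⁻¹ ^ (n + m + 1),
    fun z hz => hasSum_choose_mul_inv_pow (hz.trans_le hz₀) m, ?_⟩
  refine (IsBigO.of_bound 1 (Eventually.of_forall fun n => ?_)).trans (isBigO_choose_add m)
  rw [norm_mul, one_mul, Complex.norm_natCast, Real.norm_natCast, norm_pow, norm_inv]
  exact mul_le_of_le_one_right (Nat.cast_nonneg _)
    (pow_le_one₀ (by positivity) (inv_le_one_of_one_le₀ hz₀))

theorem coeffsIsBigOPow_div_of_rootMultiplicity_le {M : ℕ} {D : ℂ[X]} (hD : D ≠ 0)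
    (hroots : ∀ z, D.IsRoot z → 1 ≤ ‖z‖) (hmult : ∀ z, D.rootMultiplicity z ≤ M + 1)
    (P : ℂ[X]) : CoeffsIsBigOPow M fun z => P.eval z / D.eval z := by
  induction hdeg : D.natDegree using Nat.strong_induction_on generalizing D P with
  | _ k ih =>
  by_cases hroot : ∃ z₀, D.IsRoot z₀
  swap
  · have hD0 : D.degree = 0 := by
      by_contra h
      exact hroot (IsAlgClosed.exists_root D h)
    rw [eq_C_of_degree_eq_zero hD0]
    exact (coeffsIsBigOPow_eval M (P * C (D.coeff 0)⁻¹)).congr fun z _ => by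
      simp [div_eq_mul_inv]
  obtain ⟨z₀, hz₀⟩ := hroot
  obtain ⟨m, hm⟩ : ∃ m, D.rootMultiplicity z₀ = m + 1 :=
    Nat.exists_eq_add_one.mpr ((rootMultiplicity_pos hD).mpr hz₀)
  obtain ⟨E, hDE, hE⟩ := exists_eq_sub_pow_rootMultiplicity_mul hD z₀
  rw [hm] at hDE
  set D' := (C z₀ - X) ^ m * E
  have hlin : C z₀ - X ≠ 0 := by rw [← neg_sub]; exact neg_ne_zero.mpr (X_sub_C_ne_zero z₀)
  have hDD' : D = (C z₀ - X) * D' := by rw [hDE, pow_succ']; ring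
  have hD' : D' ≠ 0 := right_ne_zero_of_mul (hDD' ▸ hD)
  have hdeg' : D'.natDegree < k := by
    rw [← hdeg, hDD', natDegree_mul hlin hD', ← neg_sub, natDegree_neg, natDegree_X_sub_C]
    omega
  have hdvd : D' ∣ D := ⟨C z₀ - X, by rw [hDD', mul_comm]⟩
  -- partial fractions at `z₀`; the remainder `G / D'` has a denominator of smaller degree
  obtain ⟨G, hG⟩ := exists_eval_div_eq_div_sub_pow_add P hE m
  have hrest := ih _ hdeg' hD' (fun z hz => hroots z (hz.dvd hdvd))
    (fun z => (rootMultiplicity_le_rootMultiplicity_of_dvd hD hdvd z).trans (hmult z)) G rfl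
  have hz₀1 : 1 ≤ ‖z₀‖ := hroots z₀ hz₀
  refine ((((coeffsIsBigOPow_inv_sub_pow hz₀1 m).const_mul (P.eval z₀ / E.eval z₀)).mono
    (by have := hmult z₀; omega)).add hrest).congr fun z hz => ?_
  have hDz : D.eval z = (z₀ - z) ^ (m + 1) * E.eval z := by simp [hDE]
  have hDz0 : D.eval z ≠ 0 := fun h => (hroots z h).not_gt hz
  rw [hDz, hG z (by rintro rfl; linarith) (right_ne_zero_of_mul (hDz ▸ hDz0))]
  simp [D', div_eq_mul_inv]

theorem tendsto_div_choose_of_coeffsIsBigOPow {U : ℕ → ℂ} {c : ℂ} {r : ℕ} {f : ℂ → ℂ}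
    (hf : CoeffsIsBigOPow r f)
    (hU : ∀ z : ℂ, ‖z‖ < 1 →
      HasSum (fun N => (U N - c * ((N + (r + 1)).choose (r + 1) : ℂ)) * z ^ N) (f z)) :
    Tendsto (fun N => U N / ((N + (r + 1)).choose (r + 1) : ℂ)) atTop (𝓝 c) := by
  set b : ℕ → ℂ := fun N => ((N + (r + 1)).choose (r + 1) : ℂ)
  obtain ⟨a, ha, haO⟩ := hf
  have hremO : (fun N => U N - c * b N) =o[atTop] b := by
    rw [← eq_of_hasSum_mul_pow ha hU]
    exact haO.trans_isLittleO (((isLittleO_pow_pow_atTop_of_lt r.lt_succ_self).comp_tendsto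
      tendsto_natCast_atTop_atTop).trans_isBigO ((isBigO_pow_choose_add (r + 1)).trans
        (isBigO_of_le _ fun n => by simp [b])))
  have hb : ∀ N, b N ≠ 0 := fun N => Nat.cast_ne_zero.mpr (Nat.choose_pos (by omega)).ne'
  simpa [sub_div, mul_div_cancel_right₀ _ (hb _)] using hremO.tendsto_div_nhds_zero.const_add c

theorem tendsto_sum_range_div_choose {B E P : ℂ[X]} {r : ℕ}
    (hBE : B = (C 1 - X) ^ (r + 1) * E) (hE : E.eval 1 ≠ 0)
    (hroots : ∀ z, B.IsRoot z → 1 ≤ ‖z‖) (hmult : ∀ z, B.rootMultiplicity z ≤ r + 1)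
    {u : ℕ → ℂ} (hu : ∀ z : ℂ, ‖z‖ < 1 → HasSum (fun n => u n * z ^ n) (P.eval z / B.eval z)) :
    Tendsto (fun N => (∑ n ∈ Finset.range (N + 1), u n) / ((N + (r + 1)).choose (r + 1) : ℂ))
      atTop (𝓝 (P.eval 1 / E.eval 1)) := by
  have hB : B ≠ 0 := fun h => absurd (hroots 0 (by simp [h])) (by simp)
  obtain ⟨G, hG⟩ := exists_eval_div_eq_div_sub_pow_add P hE (r + 1)
  refine tendsto_div_choose_of_coeffsIsBigOPow
    (coeffsIsBigOPow_div_of_rootMultiplicity_le hB hroots hmult G) fun z hz => ?_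
  have hz1 : z ≠ 1 := by rintro rfl; simp at hz
  have h1z : (1 : ℂ) - z ≠ 0 := sub_ne_zero.mpr hz1.symm
  have hBz : B.eval z = (1 - z) ^ (r + 1) * E.eval z := by simp [hBE]
  have hBz0 : B.eval z ≠ 0 := fun h => (hroots z h).not_gt hz
  have hEz : E.eval z ≠ 0 := right_ne_zero_of_mul (hBz ▸ hBz0)
  have hPB : P.eval z / B.eval z * (1 - z)⁻¹ =
      P.eval z / ((1 - z) ^ (r + 1 + 1) * E.eval z) := by
    rw [hBz]
    field_simp
    ring
  have hval : P.eval z / B.eval z * (1 - z)⁻¹ -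
      P.eval 1 / E.eval 1 * (1 / (1 - z) ^ (r + 1 + 1)) = G.eval z / B.eval z := by
    rw [hPB, hG z hz1 hEz, hBz]
    ring
  rw [← hval]
  exact ((hasSum_sum_range_mul_pow hu hz).sub
    ((hasSum_choose_mul_geometric_of_norm_lt_one (r + 1) hz).mul_left _)).congr_fun
    fun N => by ring

theorem eventually_eval_div_eval_ne_zero_nhdsLT {A B : ℂ[X]} (hA : A.eval 1 ≠ 0)
    (hB : ∀ z : ℂ, ‖z‖ < 1 → B.eval z ≠ 0) :
    ∀ᶠ t : ℝ in 𝓝[<] 1, A.eval (t : ℂ) / B.eval (t : ℂ) ≠ 0 := by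
  have hAt : ∀ᶠ t : ℝ in 𝓝[<] 1, A.eval (t : ℂ) ≠ 0 :=
    (((A.continuous.comp Complex.continuous_ofReal).tendsto 1).mono_left
      nhdsWithin_le_nhds).eventually_ne (by simpa using hA)
  filter_upwards [hAt, Ioo_mem_nhdsLT (show (0 : ℝ) < 1 by norm_num)] with t hAt ht
  refine div_ne_zero hAt (hB _ ?_)
  rw [Complex.norm_real, Real.norm_of_nonneg ht.1.le]
  exact ht.2

theorem tendsto_eval_mul_div_eval_mul_nhdsLT {p q : ℂ[X]} {g : ℝ → ℂ} (hq : q.eval 1 ≠ 0)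
    (hg : ∀ᶠ t in 𝓝[<] (1 : ℝ), g t ≠ 0) :
    Tendsto (fun t : ℝ => p.eval (t : ℂ) * g t / (q.eval (t : ℂ) * g t)) (𝓝[<] 1)
      (𝓝 (p.eval 1 / q.eval 1)) := by
  have hlim : ∀ P : ℂ[X], Tendsto (fun t : ℝ => P.eval (t : ℂ)) (𝓝[<] 1) (𝓝 (P.eval 1)) :=
    fun P => by
      simpa [Function.comp_def] using
        ((P.continuous.comp Complex.continuous_ofReal).tendsto 1).mono_left nhdsWithin_le_nhds
  exact ((hlim p).div (hlim q) hq).congr' (hg.mono fun t ht => (mul_div_mul_right _ _ ht).symm)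

/-- Let `g = A/B` be a rational function (with `A, B` coprime) having no
poles in the open unit disk, with a pole at `1` whose order is `≥ 1` and is maximal among
the orders of all poles.  If `p, q` are polynomials with `q 1 ≠ 0` and `s n`, `d n` are the
Taylor coefficients at `0` of `p·g` and `q·g`, then both `lim_{t→1⁻} s(t)/d(t)` (along real
`t < 1`) and `lim_N (∑_{n ≤ N} s n)/(∑_{n ≤ N} d n)` exist and equal `p 1 / q 1`. -/
theorem statement0 (A B p q : Polynomial ℂ)
    (hcop : IsCoprime A B)
    (hpoles : ∀ z : ℂ, ‖z‖ < 1 → B.eval z ≠ 0)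
    (hr : 1 ≤ B.rootMultiplicity 1)
    (hmax : ∀ z : ℂ, z ≠ 1 → B.rootMultiplicity z ≤ B.rootMultiplicity 1)
    (hq1 : q.eval 1 ≠ 0)
    (s d : ℕ → ℂ)
    (hs : ∀ z : ℂ, ‖z‖ < 1 →
      HasSum (fun n : ℕ => s n * z ^ n) (p.eval z * (A.eval z / B.eval z)))
    (hd : ∀ z : ℂ, ‖z‖ < 1 →
      HasSum (fun n : ℕ => d n * z ^ n) (q.eval z * (A.eval z / B.eval z))) :
    Tendsto (fun t : ℝ =>
        (p.eval (t : ℂ) * (A.eval (t : ℂ) / B.eval (t : ℂ))) /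
          (q.eval (t : ℂ) * (A.eval (t : ℂ) / B.eval (t : ℂ))))
      (𝓝[<] (1 : ℝ)) (𝓝 (p.eval 1 / q.eval 1)) ∧
    Tendsto (fun N : ℕ =>
        (∑ n ∈ Finset.range (N + 1), s n) / (∑ n ∈ Finset.range (N + 1), d n))
      atTop (𝓝 (p.eval 1 / q.eval 1)) := by
  have hB : B ≠ 0 := fun h => hpoles 0 (by simp) (by simp [h])
  have hroots : ∀ z, B.IsRoot z → 1 ≤ ‖z‖ := fun z hz => not_lt.mp fun h => hpoles z h hz
  have hA1 : A.eval 1 ≠ 0 := by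
    have hB1 : B.eval 1 = 0 := (rootMultiplicity_pos hB).mp hr
    obtain ⟨u, v, huv⟩ := hcop
    intro hA
    simpa [hA, hB1] using congrArg (eval 1) huv
  refine ⟨tendsto_eval_mul_div_eval_mul_nhdsLT hq1
    (eventually_eval_div_eval_ne_zero_nhdsLT hA1 hpoles), ?_⟩
  obtain ⟨r, hr1⟩ : ∃ r, B.rootMultiplicity 1 = r + 1 := Nat.exists_eq_add_one.mpr hr
  obtain ⟨E, hBE, hE⟩ := exists_eq_sub_pow_rootMultiplicity_mul hB 1
  rw [hr1] at hBE
  have hmult : ∀ z, B.rootMultiplicity z ≤ r + 1 := fun z => hr1 ▸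
    (eq_or_ne z 1).elim (fun h => h ▸ le_rfl) (hmax z)
  have hPA : ∀ (P : ℂ[X]) (z : ℂ), P.eval z * (A.eval z / B.eval z) = (P * A).eval z / B.eval z :=
    fun P z => by rw [eval_mul, mul_div_assoc]
  have hlim_s := tendsto_sum_range_div_choose hBE hE hroots hmult fun z hz => hPA p z ▸ hs z hz
  have hlim_d := tendsto_sum_range_div_choose hBE hE hroots hmult fun z hz => hPA q z ▸ hd z hz
  have hb : ∀ N, (((N + (r + 1)).choose (r + 1) : ℕ) : ℂ) ≠ 0 :=
    fun N => Nat.cast_ne_zero.mpr (Nat.choose_pos (by omega)).ne'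
  convert hlim_s.div hlim_d (by simp [hq1, hA1, hE]) using 2 with N
  · exact (div_div_div_cancel_right₀ (hb N) _ _).symm
  · simp only [eval_mul]
    field_simp
end

section
/- Let W be a finite group, ρ : W → GL(λ) a finite-dimensional irreducible complex representation, S ⊆ W a finite subset closed under conjugation, c : S → ℂ a function constant on conjugacy classes of W contained in S, and for each s ∈ S let α_s be a nonzero real linear functional on ℝˡ. Let Ω = {x ∈ ℝˡ : α_s(x) ≠ 0 for all s ∈ S}, and let K : Ω → End_ℂ(λ) be differentiable and satisfy, for every y ∈ ℝˡ and every x ∈ Ω, the equation ∂_y K(x) + Σ_{s∈S} c_s (α_s(y)/α_s(x)) (ρ(s)∘K(x) + K(x)∘ρ(s)) = 0, where ∂_y denotes the directional derivative in direction y. Then K is homogeneous of degree −2a, where a = tr(Σ_{s∈S} c_s ρ(s))/dim λ; that is, K(t x) = t^{−2a} K(x) for all real t > 0 and all x ∈ Ω, where t^{−2a} = exp(−2a·log t). -/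
/-!
Along the ray `u ↦ u • x` the system with `y = x` reads `u ∂ᵤ K(u x) = -(A K + K A)`, where
`A = ∑ c_s ρ(s)`, because `α_s(x)/α_s(u x) = u⁻¹`. Since `S` and `c` are conjugation invariant,
`A` commutes with `ρ`, so by Schur's lemma `A = a • 1` with `a = tr A / dim λ`. The ray equation
becomes the scalar ODE `u f' = -2a f`, whose solutions are `f(u) = u^{-2a} f(1)`.
-/

open Module

theorem commute_sum_smul_of_conj_mem {W k R : Type*} [Group W] [CommSemiring k] [Semiring R]
    [Algebra k R] (ρ : W →* R) {S : Finset W} (hS : ∀ w s : W, s ∈ S → w * s * w⁻¹ ∈ S)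
    {c : W → k} (hc : ∀ w s : W, s ∈ S → c (w * s * w⁻¹) = c s) (w : W) :
    Commute (ρ w) (∑ s ∈ S, c s • ρ s) := by
  change ρ w * _ = _ * ρ w
  simp only [Finset.mul_sum, Finset.sum_mul, mul_smul_comm, smul_mul_assoc, ← map_mul]
  refine Finset.sum_nbij' (fun s => w * s * w⁻¹) (fun s => w⁻¹ * s * w) (fun s hs => hS w s hs)
    (fun s hs => by simpa using hS w⁻¹ s hs) (fun s _ => by group) (fun s _ => by group)
    fun s hs => ?_
  rw [hc w s hs, inv_mul_cancel_right]

theorem Module.End.exists_eq_smul_one_of_forall_commute {k V ι : Type*} [Field k] [IsAlgClosed k]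
    [AddCommGroup V] [Module k V] [FiniteDimensional k V] [Nontrivial V] (ρ : ι → End k V)
    (hirr : ∀ U : Submodule k V, (∀ i, ∀ v ∈ U, ρ i v ∈ U) → U = ⊥ ∨ U = ⊤)
    {A : End k V} (hA : ∀ i, Commute A (ρ i)) : ∃ μ : k, A = μ • 1 := by
  obtain ⟨μ, hμ⟩ := A.exists_eigenvalue
  have htop : A.eigenspace μ = ⊤ :=
    (hirr _ fun i _ hv => A.mapsTo_genEigenspace_of_comm (hA i) μ 1 hv).resolve_left hμ
  exact ⟨μ, LinearMap.ext fun v => End.mem_eigenspace_iff.mp (htop ▸ Submodule.mem_top)⟩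

theorem Module.End.eq_trace_div_finrank_smul_one_of_forall_commute {k V ι : Type*} [Field k]
    [IsAlgClosed k] [CharZero k] [AddCommGroup V] [Module k V] [FiniteDimensional k V]
    [Nontrivial V] (ρ : ι → End k V)
    (hirr : ∀ U : Submodule k V, (∀ i, ∀ v ∈ U, ρ i v ∈ U) → U = ⊥ ∨ U = ⊤)
    {A : End k V} (hA : ∀ i, Commute A (ρ i)) :
    A = (LinearMap.trace k V A / finrank k V) • 1 := by
  obtain ⟨μ, rfl⟩ := exists_eq_smul_one_of_forall_commute ρ hirr hA
  have : (finrank k V : k) ≠ 0 := Nat.cast_ne_zero.mpr finrank_pos.ne'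
  rw [map_smul, LinearMap.trace_one, smul_eq_mul, mul_div_cancel_right₀ _ this]

theorem ContinuousLinearMap.sum_smul_mul_add_mul_eq_of_irreducible {W V : Type*} [Group W]
    [NormedAddCommGroup V] [NormedSpace ℂ V] [FiniteDimensional ℂ V] [Nontrivial V]
    (ρ : W →* (V →L[ℂ] V))
    (hirr : ∀ U : Submodule ℂ V, (∀ w : W, ∀ v ∈ U, ρ w v ∈ U) → U = ⊥ ∨ U = ⊤)
    {S : Finset W} (hS : ∀ w s : W, s ∈ S → w * s * w⁻¹ ∈ S) {c : W → ℂ}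
    (hc : ∀ w s : W, s ∈ S → c (w * s * w⁻¹) = c s) (T : V →L[ℂ] V) :
    ∑ s ∈ S, c s • (ρ s * T + T * ρ s) =
      (2 * (LinearMap.trace ℂ V (∑ s ∈ S, c s • ((ρ s : V →L[ℂ] V) : V →ₗ[ℂ] V))
        / finrank ℂ V)) • T := by
  set A : End ℂ V := ∑ s ∈ S, c s • ((ρ s : V →L[ℂ] V) : V →ₗ[ℂ] V)
  have hschur : A = (LinearMap.trace ℂ V A / finrank ℂ V) • 1 :=
    End.eq_trace_div_finrank_smul_one_of_forall_commute (fun w => (ρ w : End ℂ V)) hirr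
      fun w => (commute_sum_smul_of_conj_mem
        ((toLinearMapRingHom : _ →+* End ℂ V).toMonoidHom.comp ρ) hS hc w).symm
  set a := LinearMap.trace ℂ V A / finrank ℂ V
  have hA : ∀ v, ∑ s ∈ S, c s • ρ s v = a • v := fun v => by
    simpa [A] using congr($hschur v)
  ext1 v
  have hAT := congr(T $(hA v))
  simp only [map_sum, map_smul] at hAT
  simp [smul_add, Finset.sum_add_distrib, hA, hAT, two_mul, add_smul]

theorem eq_cexp_mul_log_smul_of_hasDerivAt {E : Type*} [NormedAddCommGroup E] [NormedSpace ℂ E]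
    {f : ℝ → E} {d : ℂ} (hf : ∀ u : ℝ, 0 < u → HasDerivAt f ((d * (u : ℂ)⁻¹) • f u) u)
    {t : ℝ} (ht : 0 < t) : f t = Complex.exp (d * Real.log t) • f 1 := by
  set g : ℝ → E := fun u => Complex.exp (-(d * Real.log u)) • f u
  have hg : ∀ u : ℝ, 0 < u → HasDerivAt g 0 u := by
    intro u hu
    have hlog : HasDerivAt (fun u : ℝ => ((Real.log u : ℝ) : ℂ)) (u : ℂ)⁻¹ u := by
      simpa using (Real.hasDerivAt_log hu.ne').ofReal_comp
    refine (((hlog.const_mul d).neg.cexp).smul (hf u hu)).congr_deriv ?_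
    rw [smul_smul, ← add_smul]
    ring_nf
    simp
  have hconst : g t = g 1 :=
    isOpen_Ioi.is_const_of_deriv_eq_zero isPreconnected_Ioi
      (fun u hu => (hg u hu).differentiableAt.differentiableWithinAt)
      (fun u hu => (hg u hu).deriv) ht (Set.mem_Ioi.mpr one_pos)
  simp only [g, Real.log_one, Complex.ofReal_zero, mul_zero, neg_zero, Complex.exp_zero,
    one_smul] at hconst
  rw [← hconst, smul_smul, ← Complex.exp_add, add_neg_cancel, Complex.exp_zero, one_smul]

theorem apply_smul_eq_cexp_mul_log_smul_of_fderiv_apply_self {F E : Type*}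
    [NormedAddCommGroup F] [NormedSpace ℝ F] [NormedAddCommGroup E] [NormedSpace ℂ E]
    {K : F → E} {x : F} {d : ℂ} (hK : ∀ u : ℝ, 0 < u → DifferentiableAt ℝ K (u • x))
    (hEuler : ∀ u : ℝ, 0 < u → fderiv ℝ K (u • x) x = (d * (u : ℂ)⁻¹) • K (u • x))
    {t : ℝ} (ht : 0 < t) : K (t • x) = Complex.exp (d * Real.log t) • K x := by
  have hK' : ∀ u : ℝ, 0 < u →
      HasDerivAt (fun u : ℝ => K (u • x)) ((d * (u : ℂ)⁻¹) • K (u • x)) u := by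
    intro u hu
    rw [← hEuler u hu]
    have hline : HasDerivAt (fun u : ℝ => u • x) x u := by
      simpa using (hasDerivAt_id u).smul_const x
    exact (hK u hu).hasFDerivAt.comp_hasDerivAt u hline
  simpa using eq_cexp_mul_log_smul_of_hasDerivAt hK' ht

theorem statement3_general {W : Type*} [Group W] (l m : ℕ) (hm : 0 < m)
    (ρ : W →* ((Fin m → ℂ) →L[ℂ] (Fin m → ℂ)))
    (hirr : ∀ U : Submodule ℂ (Fin m → ℂ),
      (∀ w : W, ∀ v ∈ U, ρ w v ∈ U) → U = ⊥ ∨ U = ⊤)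
    (S : Finset W)
    (hSconj : ∀ w s : W, s ∈ S → w * s * w⁻¹ ∈ S)
    (c : W → ℂ)
    (hc : ∀ w s : W, s ∈ S → c (w * s * w⁻¹) = c s)
    (α : W → ((Fin l → ℝ) →ₗ[ℝ] ℝ))
    (K : (Fin l → ℝ) → ((Fin m → ℂ) →L[ℂ] (Fin m → ℂ)))
    (hdiff : ∀ x : Fin l → ℝ, (∀ s ∈ S, α s x ≠ 0) → DifferentiableAt ℝ K x)
    (heq : ∀ x : Fin l → ℝ, (∀ s ∈ S, α s x ≠ 0) → ∀ y : Fin l → ℝ,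
      fderiv ℝ K x y
        + ∑ s ∈ S, (c s * ((α s y / α s x : ℝ) : ℂ)) • (ρ s * K x + K x * ρ s) = 0) :
    ∀ t : ℝ, 0 < t → ∀ x : Fin l → ℝ, (∀ s ∈ S, α s x ≠ 0) →
      K (t • x) =
        Complex.exp (-2 *
            ((LinearMap.trace ℂ (Fin m → ℂ)
              (∑ s ∈ S, c s • ((ρ s : (Fin m → ℂ) →L[ℂ] (Fin m → ℂ)) :
                (Fin m → ℂ) →ₗ[ℂ] (Fin m → ℂ)))) / (m : ℂ)) *
          (Real.log t : ℂ)) • K x := by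
  intro t ht x hx
  have : Nonempty (Fin m) := ⟨⟨0, hm⟩⟩
  have hsum := ContinuousLinearMap.sum_smul_mul_add_mul_eq_of_irreducible ρ hirr hSconj hc
  rw [finrank_fin_fun] at hsum
  have hray : ∀ u : ℝ, 0 < u → ∀ s ∈ S, α s (u • x) ≠ 0 := fun u hu s hs => by
    rw [map_smul, smul_eq_mul]
    exact mul_ne_zero hu.ne' (hx s hs)
  refine apply_smul_eq_cexp_mul_log_smul_of_fderiv_apply_self
    (fun u hu => hdiff _ (hray u hu)) (fun u hu => ?_) ht
  have hratio : ∀ s ∈ S, (c s * ((α s x / α s (u • x) : ℝ) : ℂ)) •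
      (ρ s * K (u • x) + K (u • x) * ρ s)
        = (u : ℂ)⁻¹ • c s • (ρ s * K (u • x) + K (u • x) * ρ s) := fun s hs => by
    rw [map_smul, smul_eq_mul, div_mul_cancel_right₀ (hx s hs), smul_smul, Complex.ofReal_inv,
      mul_comm]
  have hKZ := heq _ (hray u hu) x
  rw [Finset.sum_congr rfl hratio, ← Finset.smul_sum, hsum] at hKZ
  linear_combination (norm := module) hKZ

/-- Homogeneity of solutions of the two-sided KZ-type system.  Here `W` is a
finite group, `ρ : W →* End(ℂᵐ)` an irreducible representation (each `ρ w` is invertible as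
`W` is a group), `S` a conjugation-closed finite subset with `c` constant on conjugacy
classes, and `α_s` nonzero real linear functionals on `ℝˡ`.  If `K`, defined on the
complement `Ω` of the hyperplanes `ker α_s`, is differentiable and satisfies
`∂_y K + ∑_s c_s (α_s(y)/α_s(x))(ρ(s)∘K + K∘ρ(s)) = 0`, then `K` is homogeneous of degree
`−2a`, `a = tr(∑_s c_s ρ(s))/m`, that is `K (t•x) = exp(−2a log t) • K x` for `t > 0`. -/
theorem statement3 {W : Type*} [Group W] [Fintype W] (l m : ℕ) (hm : 0 < m)
    (ρ : W →* ((Fin m → ℂ) →L[ℂ] (Fin m → ℂ)))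
    (hirr : ∀ U : Submodule ℂ (Fin m → ℂ),
      (∀ w : W, ∀ v ∈ U, ρ w v ∈ U) → U = ⊥ ∨ U = ⊤)
    (S : Finset W)
    (hSconj : ∀ w s : W, s ∈ S → w * s * w⁻¹ ∈ S)
    (c : W → ℂ)
    (hc : ∀ w s : W, s ∈ S → c (w * s * w⁻¹) = c s)
    (α : W → ((Fin l → ℝ) →ₗ[ℝ] ℝ))
    (hα : ∀ s ∈ S, α s ≠ 0)
    (K : (Fin l → ℝ) → ((Fin m → ℂ) →L[ℂ] (Fin m → ℂ)))
    (hdiff : ∀ x : Fin l → ℝ, (∀ s ∈ S, α s x ≠ 0) → DifferentiableAt ℝ K x)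
    (heq : ∀ x : Fin l → ℝ, (∀ s ∈ S, α s x ≠ 0) → ∀ y : Fin l → ℝ,
      fderiv ℝ K x y
        + ∑ s ∈ S, (c s * ((α s y / α s x : ℝ) : ℂ)) • (ρ s * K x + K x * ρ s) = 0) :
    ∀ t : ℝ, 0 < t → ∀ x : Fin l → ℝ, (∀ s ∈ S, α s x ≠ 0) →
      K (t • x) =
        Complex.exp (-2 *
            ((LinearMap.trace ℂ (Fin m → ℂ)
              (∑ s ∈ S, c s • ((ρ s : (Fin m → ℂ) →L[ℂ] (Fin m → ℂ)) :
                (Fin m → ℂ) →ₗ[ℂ] (Fin m → ℂ)))) / (m : ℂ)) *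
          (Real.log t : ℂ)) • K x :=
  statement3_general l m hm ρ hirr S hSconj c hc α K hdiff heq
end

section
/- Let r ≥ 1 be an integer, let p and q be polynomials with integer coefficients with q(1) ≠ 0, and let (s_n)_{n≥0} and (d_n)_{n≥0} be sequences of integers such that |s_n| ≤ d_n for all n and such that Σ_{n≥0} s_n tⁿ = p(t)/(1−t)^r and Σ_{n≥0} d_n tⁿ = q(t)/(1−t)^r for all real t with |t| < 1. Then the rational number p(1)/q(1) lies in the interval [−1, 1], and both lim_{N→∞} (Σ_{n≤N} s_n)/(Σ_{n≤N} d_n) = p(1)/q(1) and lim_{n→∞} s_n/d_n = p(1)/q(1). -/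
/-!
Uniqueness of power series expansions identifies `sₙ` with the coefficient
`∑_{k ≤ n} p_k (n - k + r - 1 choose r - 1)` of `p(t)/(1-t)^r`, and the partial sums
`∑_{n ≤ N} sₙ` with the corresponding coefficient of `p(t)/(1-t)^(r+1)` (hockey-stick identity).
Since `(n - k + j choose j) ~ n^j / j!`, this gives `sₙ ~ p(1) n^(r-1) / (r-1)!` and
`∑_{n ≤ N} sₙ ~ p(1) N^r / r!`, and likewise for `d` with `q(1) ≠ 0`.
The ratios then converge to `p(1)/q(1)`, and `|sₙ| ≤ dₙ` passes to the limit as `|p(1)| ≤ q(1)`.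
-/

open Filter Topology Asymptotics Finset Polynomial

theorem hasFPowerSeriesAt_ofScalars_of_hasSum {𝕜 : Type*} [NontriviallyNormedField 𝕜]
    {a : ℕ → 𝕜} {f : 𝕜 → 𝕜} {ε : ℝ} (hε : 0 < ε)
    (ha : ∀ t : 𝕜, ‖t‖ < ε → HasSum (fun n => a n * t ^ n) (f t)) :
    HasFPowerSeriesAt f (FormalMultilinearSeries.ofScalars 𝕜 a) 0 := by
  obtain ⟨x, hx0, hxε⟩ := NormedField.exists_norm_lt 𝕜 hε
  refine ⟨‖x‖₊, ⟨?_, by simpa using hx0, fun {y} hy => ?_⟩⟩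
  · refine FormalMultilinearSeries.le_radius_of_tendsto _ (l := 0) ?_
    simpa [norm_mul] using (ha x hxε).summable.tendsto_atTop_zero.norm
  · have hyε : ‖y‖ < ε := lt_trans (by simpa using hy) hxε
    simpa [FormalMultilinearSeries.ofScalars_apply_eq, mul_comm] using ha y hyε

theorem coeff_eq_of_hasSum_mul_pow {𝕜 : Type*} [NontriviallyNormedField 𝕜] {a b : ℕ → 𝕜}
    {f : 𝕜 → 𝕜} {ε : ℝ} (hε : 0 < ε)
    (ha : ∀ t : 𝕜, ‖t‖ < ε → HasSum (fun n => a n * t ^ n) (f t))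
    (hb : ∀ t : 𝕜, ‖t‖ < ε → HasSum (fun n => b n * t ^ n) (f t)) : a = b :=
  (FormalMultilinearSeries.ofScalars_series_eq_iff 𝕜 a b).mp
    ((hasFPowerSeriesAt_ofScalars_of_hasSum hε ha).eq_formalMultilinearSeries
      (hasFPowerSeriesAt_ofScalars_of_hasSum hε hb))

theorem coeff_mul_pow_eq_zero_of_notMem_range {R : Type*} [Ring R] (p : ℤ[X]) (t : R) {k : ℕ}
    (hk : k ∉ range (p.natDegree + 1)) : (p.coeff k : R) * t ^ k = 0 := by
  rw [coeff_eq_zero_of_natDegree_lt (by simpa using hk), Int.cast_zero, zero_mul]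

theorem hasSum_coeff_mul_pow_s6 {𝕜 : Type*} [NormedField 𝕜] (p : ℤ[X]) (t : 𝕜) :
    HasSum (fun k => (p.coeff k : 𝕜) * t ^ k) (aeval t p) := by
  simpa [aeval_eq_sum_range, zsmul_eq_mul] using
    hasSum_sum_of_ne_finset_zero fun k => coeff_mul_pow_eq_zero_of_notMem_range p t

/-- The `n`-th coefficient of the power series of `p(t) / (1 - t)^(j + 1)`. -/
def coeffDivOneSubPow (p : ℤ[X]) (j n : ℕ) : ℤ :=
  ∑ k ∈ range (n + 1), p.coeff k * (n - k + j).choose j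

theorem hasSum_coeffDivOneSubPow_mul_pow {𝕜 : Type*} [NormedField 𝕜] [CompleteSpace 𝕜]
    (p : ℤ[X]) (j : ℕ) {t : 𝕜} (ht : ‖t‖ < 1) :
    HasSum (fun n => (coeffDivOneSubPow p j n : 𝕜) * t ^ n) (aeval t p / (1 - t) ^ (j + 1)) := by
  have hp := hasSum_coeff_mul_pow_s6 p t
  have hg := hasSum_choose_mul_geometric_of_norm_lt_one j ht
  have hp_norm : Summable fun k => ‖(p.coeff k : 𝕜) * t ^ k‖ :=
    summable_of_ne_finset_zero fun k hk => by
      rw [coeff_mul_pow_eq_zero_of_notMem_range p t hk, norm_zero]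
  have hg_norm : Summable fun n => ‖((n + j).choose j : 𝕜) * t ^ n‖ :=
    (summable_choose_mul_geometric_of_norm_lt_one j (r := ‖t‖) (by simpa using ht)).of_norm_bounded
      fun n => by
        rw [norm_mul, norm_pow, Real.norm_eq_abs, abs_of_nonneg (by positivity)]
        gcongr
        simpa using Nat.norm_cast_le (α := 𝕜) ((n + j).choose j)
  have hcauchy := hasSum_sum_range_mul_of_summable_norm' hp_norm hp.summable hg_norm hg.summable
  rw [hp.tsum_eq, hg.tsum_eq, mul_one_div] at hcauchy
  convert hcauchy using 1
  funext n
  simp only [coeffDivOneSubPow, Int.cast_sum, Int.cast_mul, Int.cast_natCast, sum_mul]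
  refine sum_congr rfl fun k hk => ?_
  rw [mul_mul_mul_comm, ← pow_add, Nat.add_sub_cancel' (by simpa [Nat.lt_succ_iff] using hk)]

theorem eq_coeffDivOneSubPow_of_hasSum {s : ℕ → ℝ} (p : ℤ[X]) (j : ℕ)
    (hs : ∀ t : ℝ, |t| < 1 → HasSum (fun n => s n * t ^ n) (aeval t p / (1 - t) ^ (j + 1)))
    (n : ℕ) : s n = coeffDivOneSubPow p j n :=
  congrFun (coeff_eq_of_hasSum_mul_pow one_pos hs
    (fun _ => hasSum_coeffDivOneSubPow_mul_pow p j)) n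

theorem sum_range_coeffDivOneSubPow (p : ℤ[X]) (j N : ℕ) :
    ∑ n ∈ range (N + 1), coeffDivOneSubPow p j n = coeffDivOneSubPow p (j + 1) N := by
  have hockey : ∀ k ∈ Ico 0 (N + 1),
      ∑ n ∈ Ico k (N + 1), ((n - k + j).choose j : ℤ) = (N - k + (j + 1)).choose (j + 1) := by
    intro k hk
    rw [sum_Ico_eq_sum_range, show N + 1 - k = N - k + 1 by simp at hk; omega]
    simp only [Nat.add_sub_cancel_left]
    exact_mod_cast Nat.sum_range_add_choose (N - k) j
  simp only [coeffDivOneSubPow, range_eq_Ico]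
  rw [← sum_Ico_Ico_comm]
  exact sum_congr rfl fun k hk => by rw [← mul_sum, hockey k hk]

theorem coeffDivOneSubPow_eq_sum_range_natDegree (p : ℤ[X]) (j : ℕ) {n : ℕ}
    (hn : p.natDegree ≤ n) :
    coeffDivOneSubPow p j n = ∑ k ∈ range (p.natDegree + 1), p.coeff k * (n - k + j).choose j :=
  (sum_subset (range_subset_range.mpr (by omega)) fun k _ hk => by
    rw [coeff_eq_zero_of_natDegree_lt (by simpa using hk), zero_mul]).symm

theorem isEquivalent_natCast_sub_add (k j : ℕ) :
    (fun n : ℕ => ((n - k + j : ℕ) : ℝ)) ~[atTop] (fun n : ℕ => (n : ℝ)) := by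
  have hz : ∀ᶠ n : ℕ in atTop, (n : ℝ) + ((j : ℝ) - k) ≠ 0 := by
    filter_upwards [eventually_gt_atTop k] with n hn
    have : (k : ℝ) < n := by exact_mod_cast hn
    linarith
  have h := (isEquivalent_iff_tendsto_one hz).mpr (tendsto_natCast_div_add_atTop ((j : ℝ) - k))
  refine h.symm.congr_left ?_
  filter_upwards [eventually_ge_atTop k] with n hn
  push_cast [hn]
  ring

theorem tendsto_choose_sub_add_div_pow (k j : ℕ) :
    Tendsto (fun n : ℕ => ((n - k + j).choose j : ℝ) / (n : ℝ) ^ j) atTop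
      (𝓝 (1 / j.factorial)) := by
  have hm : Tendsto (fun n : ℕ => n - k + j) atTop atTop :=
    tendsto_atTop_mono (fun n => Nat.le_add_right (n - k) j) (tendsto_sub_atTop_nat k)
  have hchoose := ((isEquivalent_choose j).comp_tendsto hm).trans
    (((isEquivalent_natCast_sub_add k j).pow j).div IsEquivalent.refl)
  refine (hchoose.div IsEquivalent.refl).symm.tendsto_nhds (tendsto_const_nhds.congr' ?_)
  filter_upwards [eventually_ne_atTop 0] with n hn
  simp only [Pi.div_apply, Pi.pow_apply]
  field_simp

theorem tendsto_coeffDivOneSubPow_div_pow (p : ℤ[X]) (j : ℕ) :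
    Tendsto (fun n : ℕ => (coeffDivOneSubPow p j n : ℝ) / (n : ℝ) ^ j) atTop
      (𝓝 (((p.eval 1 : ℤ) : ℝ) / j.factorial)) := by
  have hlim := tendsto_finsetSum (range (p.natDegree + 1)) fun k _ =>
    (tendsto_choose_sub_add_div_pow k j).const_mul (p.coeff k : ℝ)
  have heval : ∑ k ∈ range (p.natDegree + 1), (p.coeff k : ℝ) * (1 / j.factorial) =
      ((p.eval 1 : ℤ) : ℝ) / j.factorial := by
    rw [← sum_mul, eval_eq_sum_range]
    simp [div_eq_mul_inv]
  rw [heval] at hlim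
  refine hlim.congr' ?_
  filter_upwards [eventually_ge_atTop p.natDegree] with n hn
  rw [coeffDivOneSubPow_eq_sum_range_natDegree p j hn]
  push_cast
  simp only [sum_div, mul_div_assoc]

theorem tendsto_div_pow_of_hasSum {s : ℕ → ℝ} (p : ℤ[X]) (j : ℕ)
    (hs : ∀ t : ℝ, |t| < 1 → HasSum (fun n => s n * t ^ n) (aeval t p / (1 - t) ^ (j + 1))) :
    Tendsto (fun n : ℕ => s n / (n : ℝ) ^ j) atTop (𝓝 (((p.eval 1 : ℤ) : ℝ) / j.factorial)) := by
  simpa only [← eq_coeffDivOneSubPow_of_hasSum p j hs] using tendsto_coeffDivOneSubPow_div_pow p j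

theorem tendsto_sum_range_div_pow_of_hasSum {s : ℕ → ℝ} (p : ℤ[X]) (j : ℕ)
    (hs : ∀ t : ℝ, |t| < 1 → HasSum (fun n => s n * t ^ n) (aeval t p / (1 - t) ^ (j + 1))) :
    Tendsto (fun N : ℕ => (∑ n ∈ range (N + 1), s n) / (N : ℝ) ^ (j + 1)) atTop
      (𝓝 (((p.eval 1 : ℤ) : ℝ) / (j + 1).factorial)) := by
  refine (tendsto_coeffDivOneSubPow_div_pow p (j + 1)).congr fun N => ?_
  rw [← sum_range_coeffDivOneSubPow, Int.cast_sum]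
  simp only [← eq_coeffDivOneSubPow_of_hasSum p j hs]

theorem Filter.Tendsto.div_of_div {α : Type*} {l : Filter α} {a b g : α → ℝ} {A B : ℝ}
    (ha : Tendsto (fun x => a x / g x) l (𝓝 A)) (hb : Tendsto (fun x => b x / g x) l (𝓝 B))
    (hB : B ≠ 0) (hg : ∀ᶠ x in l, g x ≠ 0) :
    Tendsto (fun x => a x / b x) l (𝓝 (A / B)) :=
  (ha.div hb hB).congr' (by filter_upwards [hg] with x hx using div_div_div_cancel_right₀ hx _ _)

theorem div_mem_Icc_of_abs_le_of_tendsto_div {α : Type*} {l : Filter α} [l.NeBot]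
    {a b g : α → ℝ} {A B : ℝ} (hab : ∀ x, |a x| ≤ b x)
    (ha : Tendsto (fun x => a x / g x) l (𝓝 A)) (hb : Tendsto (fun x => b x / g x) l (𝓝 B))
    (hB : B ≠ 0) (hg : ∀ᶠ x in l, 0 < g x) :
    A / B ∈ Set.Icc (-1 : ℝ) 1 := by
  have hAB : |A| ≤ B := le_of_tendsto_of_tendsto ha.abs hb <| by
    filter_upwards [hg] with x hx
    rw [abs_div, abs_of_pos hx]
    exact div_le_div_of_nonneg_right (hab x) hx.le
  have hB_pos : 0 < B := lt_of_le_of_ne ((abs_nonneg A).trans hAB) hB.symm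
  rw [Set.mem_Icc, ← abs_le, abs_div, abs_of_pos hB_pos, div_le_one hB_pos]
  exact hAB

/-- If `r ≥ 1`, `p, q ∈ ℤ[t]` with `q(1) ≠ 0`, and integer sequences
`s, d` satisfy `|sₙ| ≤ dₙ` and `∑ sₙ tⁿ = p(t)/(1−t)^r`, `∑ dₙ tⁿ = q(t)/(1−t)^r` for all
real `|t| < 1`, then `p(1)/q(1) ∈ [−1,1]` and both the ratios of partial sums and the
ratios `sₙ/dₙ` converge to `p(1)/q(1)`. -/
theorem statement6 (r : ℕ) (hr : 1 ≤ r) (p q : Polynomial ℤ)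
    (hq1 : q.eval 1 ≠ 0) (s d : ℕ → ℤ)
    (hsd : ∀ n, |s n| ≤ d n)
    (hs : ∀ t : ℝ, |t| < 1 →
      HasSum (fun n : ℕ => (s n : ℝ) * t ^ n) ((Polynomial.aeval t p) / (1 - t) ^ r))
    (hd : ∀ t : ℝ, |t| < 1 →
      HasSum (fun n : ℕ => (d n : ℝ) * t ^ n) ((Polynomial.aeval t q) / (1 - t) ^ r)) :
    ((p.eval 1 : ℤ) : ℝ) / ((q.eval 1 : ℤ) : ℝ) ∈ Set.Icc (-1 : ℝ) 1 ∧
    Tendsto (fun N : ℕ =>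
        (∑ n ∈ Finset.range (N + 1), (s n : ℝ)) / (∑ n ∈ Finset.range (N + 1), (d n : ℝ)))
      atTop (𝓝 (((p.eval 1 : ℤ) : ℝ) / ((q.eval 1 : ℤ) : ℝ))) ∧
    Tendsto (fun n : ℕ => (s n : ℝ) / (d n : ℝ))
      atTop (𝓝 (((p.eval 1 : ℤ) : ℝ) / ((q.eval 1 : ℤ) : ℝ))) := by
  obtain ⟨j, rfl⟩ : ∃ j, r = j + 1 := ⟨r - 1, by omega⟩
  have hq : ∀ m : ℕ, ((q.eval 1 : ℤ) : ℝ) / m.factorial ≠ 0 := fun m =>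
    div_ne_zero (Int.cast_ne_zero.mpr hq1) (Nat.cast_ne_zero.mpr m.factorial_ne_zero)
  have hcancel : ∀ m : ℕ, ((p.eval 1 : ℤ) : ℝ) / m.factorial / (((q.eval 1 : ℤ) : ℝ) / m.factorial)
      = ((p.eval 1 : ℤ) : ℝ) / ((q.eval 1 : ℤ) : ℝ) := fun m =>
    div_div_div_cancel_right₀ (Nat.cast_ne_zero.mpr m.factorial_ne_zero) _ _
  have hs_lim := tendsto_div_pow_of_hasSum p j hs
  have hd_lim := tendsto_div_pow_of_hasSum q j hd
  have hpos : ∀ᶠ n : ℕ in atTop, (0 : ℝ) < (n : ℝ) ^ j := by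
    filter_upwards [eventually_gt_atTop 0] with n hn
    positivity
  refine ⟨?_, ?_, ?_⟩
  · rw [← hcancel j]
    exact div_mem_Icc_of_abs_le_of_tendsto_div (a := fun n => (s n : ℝ)) (b := fun n => (d n : ℝ))
      (fun n => by exact_mod_cast hsd n)
      hs_lim hd_lim (hq j) hpos
  · rw [← hcancel (j + 1)]
    exact (tendsto_sum_range_div_pow_of_hasSum p j hs).div_of_div
      (tendsto_sum_range_div_pow_of_hasSum q j hd) (hq (j + 1))
      (eventually_ne_atTop 0 |>.mono fun N hN => by positivity)
  · rw [← hcancel j]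
    exact hs_lim.div_of_div hd_lim (hq j) (hpos.mono fun n hn => hn.ne')
end

section
/- Let (b_n)_{n≥1} be a sequence of nonnegative real numbers such that the power series Σ_{n≥1} b_n zⁿ has positive radius of convergence, let C > 0 and D > 0 be real constants, and let N′ ≥ 0 be an integer. Define a sequence (m_r)_{r≥0} by m_r = D for 0 ≤ r ≤ N′ and m_r = C·Σ_{s=1}^{r} b_s·m_{r−s} for r > N′. Then the power series Σ_{r≥0} m_r z^r has positive radius of convergence. -/
/-!
Majorant argument. Summability of `∑ bₙ xⁿ` bounds `|bₙ| xⁿ`, so for `t` a small enough multiple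
of `x` every partial sum `|C| ∑_{s=1}^r |b_s| t^s` is at most `1`. The recurrence then propagates
the bound `|m_r| t^r ≤ |D|` from the initial terms to all `r`, and the series `∑ m_r (t/2)^r` is
dominated by a geometric series.
-/

open Finset

theorem Summable.exists_abs_mul_pow_le {b : ℕ → ℝ} {x : ℝ} (hx : 0 ≤ x)
    (hsum : Summable fun n => b n * x ^ n) : ∃ K, ∀ n, |b n| * x ^ n ≤ K := by
  obtain ⟨K, hK⟩ := hsum.tendsto_atTop_zero.abs.bddAbove_range
  refine ⟨K, fun n => ?_⟩
  rw [← abs_of_nonneg (pow_nonneg hx n), ← abs_mul]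
  exact hK ⟨n, rfl⟩

theorem sum_Icc_one_pow_le_two_mul {ε : ℝ} (hε : 0 ≤ ε) (hε' : ε ≤ 1 / 2) (r : ℕ) :
    ∑ s ∈ Icc 1 r, ε ^ s ≤ 2 * ε :=
  calc ∑ s ∈ Icc 1 r, ε ^ s = ∑ s ∈ Ico 1 (r + 1), ε ^ s := rfl
    _ ≤ ε ^ 1 / (1 - ε) := geom_sum_Ico_le_of_lt_one hε (by linarith)
    _ ≤ 2 * ε := by rw [pow_one, div_le_iff₀ (by linarith)]; nlinarith

theorem exists_forall_abs_mul_sum_abs_mul_pow_le_one {b : ℕ → ℝ} {x K : ℝ} (hx : 0 < x)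
    (hK : ∀ n, |b n| * x ^ n ≤ K) (C : ℝ) :
    ∃ t, 0 < t ∧ t ≤ 1 ∧ ∀ r, |C| * ∑ s ∈ Icc 1 r, |b s| * t ^ s ≤ 1 := by
  have hK0 : 0 ≤ K := (by positivity : 0 ≤ |b 0| * x ^ 0).trans (hK 0)
  set y := min x 1
  set ε := 1 / (2 * (|C| * K + 1)) with hε_def
  have hy : 0 < y := lt_min hx one_pos
  have hε : 0 < ε := by positivity
  have hε' : ε ≤ 1 / 2 := by
    rw [hε_def, div_le_div_iff₀ (by positivity) two_pos]
    nlinarith [abs_nonneg C]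
  have hterm (s : ℕ) : |b s| * (y * ε) ^ s ≤ K * ε ^ s := by
    rw [mul_pow, ← mul_assoc]
    gcongr
    exact (mul_le_mul_of_nonneg_left (pow_le_pow_left₀ hy.le (min_le_left x 1) s)
      (abs_nonneg _)).trans (hK s)
  refine ⟨y * ε, by positivity, by nlinarith [min_le_right x 1], fun r => ?_⟩
  calc |C| * ∑ s ∈ Icc 1 r, |b s| * (y * ε) ^ s
      ≤ |C| * ∑ s ∈ Icc 1 r, K * ε ^ s :=
        mul_le_mul_of_nonneg_left (sum_le_sum fun s _ => hterm s) (abs_nonneg C)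
    _ = |C| * (K * ∑ s ∈ Icc 1 r, ε ^ s) := by rw [← mul_sum]
    _ ≤ |C| * (K * (2 * ε)) := by gcongr; exact sum_Icc_one_pow_le_two_mul hε.le hε' r
    _ = |C| * K / (|C| * K + 1) := by rw [hε_def]; field_simp
    _ ≤ 1 := by rw [div_le_one (by positivity)]; linarith

theorem abs_mul_pow_le_of_recurrence {b m : ℕ → ℝ} {C t M : ℝ} {N : ℕ} (ht : 0 ≤ t)
    (hbase : ∀ r ≤ N, |m r| * t ^ r ≤ M)
    (hrec : ∀ r, N < r → m r = C * ∑ s ∈ Icc 1 r, b s * m (r - s))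
    (hsmall : ∀ r, |C| * ∑ s ∈ Icc 1 r, |b s| * t ^ s ≤ 1) (r : ℕ) :
    |m r| * t ^ r ≤ M := by
  have hM : 0 ≤ M := (by positivity : 0 ≤ |m 0| * t ^ 0).trans (hbase 0 N.zero_le)
  induction r using Nat.strong_induction_on with
  | _ r ih =>
  rcases le_or_gt r N with hr | hr
  · exact hbase r hr
  calc |m r| * t ^ r = |C| * (|∑ s ∈ Icc 1 r, b s * m (r - s)| * t ^ r) := by
        rw [hrec r hr, abs_mul, mul_assoc]
    _ ≤ |C| * ∑ s ∈ Icc 1 r, |b s * m (r - s)| * t ^ r := by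
        rw [← sum_mul]
        gcongr
        exact abs_sum_le_sum_abs _ _
    _ = |C| * ∑ s ∈ Icc 1 r, (|b s| * t ^ s) * (|m (r - s)| * t ^ (r - s)) := by
        congr 1
        refine sum_congr rfl fun s hs => ?_
        rw [abs_mul, ← pow_mul_pow_sub t (mem_Icc.mp hs).2]
        ring
    _ ≤ |C| * ∑ s ∈ Icc 1 r, (|b s| * t ^ s) * M := by
        gcongr with s hs
        exact ih _ (Nat.sub_lt (by omega) (mem_Icc.mp hs).1)
    _ = (|C| * ∑ s ∈ Icc 1 r, |b s| * t ^ s) * M := by rw [← sum_mul, mul_assoc]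
    _ ≤ M := mul_le_of_le_one_left hM (hsmall r)

theorem summable_mul_half_pow_of_abs_mul_pow_le {m : ℕ → ℝ} {t M : ℝ} (ht : 0 ≤ t)
    (h : ∀ r, |m r| * t ^ r ≤ M) : Summable fun r => m r * (t / 2) ^ r := by
  refine Summable.of_norm_bounded (summable_geometric_two.mul_left M) fun r => ?_
  calc ‖m r * (t / 2) ^ r‖ = |m r| * t ^ r * (1 / 2) ^ r := by
        rw [Real.norm_eq_abs, abs_mul, abs_of_nonneg (by positivity : 0 ≤ (t / 2) ^ r),
          div_eq_mul_one_div t, mul_pow, mul_assoc]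
    _ ≤ M * (1 / 2) ^ r := by gcongr; exact h r

theorem statement10_general (b : ℕ → ℝ)
    (hconv : ∃ x : ℝ, 0 < x ∧ Summable fun n : ℕ => b n * x ^ n)
    (C D : ℝ) (N' : ℕ) (m : ℕ → ℝ)
    (hm1 : ∀ r : ℕ, r ≤ N' → m r = D)
    (hm2 : ∀ r : ℕ, N' < r → m r = C * ∑ s ∈ Finset.Icc 1 r, b s * m (r - s)) :
    ∃ x : ℝ, 0 < x ∧ Summable fun r : ℕ => m r * x ^ r := by
  obtain ⟨x, hx, hsum⟩ := hconv
  obtain ⟨K, hK⟩ := hsum.exists_abs_mul_pow_le hx.le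
  obtain ⟨t, ht0, ht1, hsmall⟩ := exists_forall_abs_mul_sum_abs_mul_pow_le_one hx hK C
  have hbase : ∀ r ≤ N', |m r| * t ^ r ≤ |D| := fun r hr => by
    rw [hm1 r hr]
    exact mul_le_of_le_one_right (abs_nonneg D) (pow_le_one₀ ht0.le ht1)
  exact ⟨t / 2, by positivity, summable_mul_half_pow_of_abs_mul_pow_le ht0.le
    (abs_mul_pow_le_of_recurrence ht0.le hbase hm2 hsmall)⟩

/-- If `(bₙ)_{n≥1}` are nonnegative reals whose power series has positive
radius of convergence, `C, D > 0`, `N′ ≥ 0`, and `(m_r)` satisfies `m_r = D` for `r ≤ N′`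
and `m_r = C·∑_{s=1}^r b_s m_{r−s}` for `r > N′`, then `∑ m_r z^r` has positive radius of
convergence. -/
theorem statement10 (b : ℕ → ℝ) (hb : ∀ n, 1 ≤ n → 0 ≤ b n)
    (hconv : ∃ x : ℝ, 0 < x ∧ Summable fun n : ℕ => b n * x ^ n)
    (C D : ℝ) (hC : 0 < C) (hD : 0 < D) (N' : ℕ) (m : ℕ → ℝ)
    (hm1 : ∀ r : ℕ, r ≤ N' → m r = D)
    (hm2 : ∀ r : ℕ, N' < r → m r = C * ∑ s ∈ Finset.Icc 1 r, b s * m (r - s)) :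
    ∃ x : ℝ, 0 < x ∧ Summable fun r : ℕ => m r * x ^ r :=
  statement10_general b hconv C D N' m hm1 hm2
end

section
/- Let α₁, …, α_m be nonzero real linear functionals on ℝˡ. Then there exists ε > 0 such that for all real numbers κ₁, …, κ_m with 0 ≤ κ_j < ε for each j, the function x ↦ ∏_{j=1}^m |α_j(x)|^{−κ_j}, defined on the complement of the union of the hyperplanes ker α_j (a set of full Lebesgue measure), is locally integrable on ℝˡ with respect to Lebesgue measure. -/
/-!
By weighted AM–GM, `∏ⱼ |αⱼ x|^{-κⱼ} ≤ (1/m) ∑ⱼ |αⱼ x|^{-m κⱼ}`, so with `ε = 1/m` it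
suffices that each `|αⱼ|^{-s}` with `s = m κⱼ < 1` is locally integrable. Splitting
`ℝˡ ≃ ℝ × ker αⱼ` turns `|αⱼ|^{-s}` into a function of the first coordinate alone, and
`t ↦ |t|^{-s}` is locally integrable on `ℝ` for `s < 1`.
-/

open MeasureTheory Measure Filter

section

variable {X Y G : Type*} [TopologicalSpace X] [MeasurableSpace X] [TopologicalSpace Y]
  [MeasurableSpace Y] [NormedAddCommGroup G] {μ : Measure X}

theorem MeasureTheory.LocallyIntegrable.comp_fst [SFinite μ] {g : X → G}
    (hg : LocallyIntegrable g μ) (ν : Measure Y) [SFinite ν] [IsLocallyFiniteMeasure ν] :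
    LocallyIntegrable (fun p : X × Y ↦ g p.1) (μ.prod ν) := by
  rintro ⟨x, y⟩
  obtain ⟨U, hU, hgU⟩ := hg x
  obtain ⟨V, hV, hνV⟩ := ν.finiteAt_nhds y
  have : IsFiniteMeasure (ν.restrict V) := isFiniteMeasure_restrict.2 hνV.ne
  refine ⟨U ×ˢ V, by rw [nhds_prod_eq]; exact prod_mem_prod hU hV, ?_⟩
  rw [IntegrableOn, ← prod_restrict]
  exact hgU.comp_fst _

theorem MeasureTheory.LocallyIntegrable.smul_measure {g : X → G} (hg : LocallyIntegrable g μ)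
    {c : ENNReal} (hc : c ≠ ⊤) : LocallyIntegrable g (c • μ) := fun x ↦
  let ⟨U, hU, hgU⟩ := hg x
  ⟨U, hU, by rw [IntegrableOn, restrict_smul]; exact hgU.smul_measure hc⟩

theorem MeasureTheory.LocallyIntegrable.prod_rpow_of_sum_eq_one [SecondCountableTopology X]
    {ι : Type*} [Fintype ι] {w : ι → ℝ} (hw₀ : ∀ i, 0 ≤ w i) (hw : ∑ i, w i = 1)
    {g : ι → X → ℝ} (hg₀ : ∀ i x, 0 ≤ g i x) (hg : ∀ i, LocallyIntegrable (g i) μ) :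
    LocallyIntegrable (fun x ↦ ∏ i, g i x ^ w i) μ := by
  have hmean : LocallyIntegrable (fun x ↦ ∑ i, w i * g i x) μ :=
    locallyIntegrable_finsetSum _ fun i _ ↦ (hg i).smul (w i)
  refine hmean.mono (Finset.aestronglyMeasurable_fun_prod _ fun i _ ↦
    ((hg i).aestronglyMeasurable.aemeasurable.pow_const (w i)).aestronglyMeasurable) ?_
  refine ae_of_all _ fun x ↦ ?_
  rw [Real.norm_of_nonneg (Finset.prod_nonneg fun i _ ↦ Real.rpow_nonneg (hg₀ i x) _),
    Real.norm_of_nonneg (Finset.sum_nonneg fun i _ ↦ mul_nonneg (hw₀ i) (hg₀ i x))]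
  exact Real.geom_mean_le_arith_mean_weighted _ _ _ (fun i _ ↦ hw₀ i) hw fun i _ ↦ hg₀ i x

end

theorem locallyIntegrable_abs_rpow_neg {s : ℝ} (hs : s < 1) :
    LocallyIntegrable (fun t : ℝ ↦ |t| ^ (-s)) := by
  refine locallyIntegrable_of_norm_le_rpow (C := 1) (α := s) (by simp) (by simpa using hs)
    (ae_of_all _ fun t ↦ ?_) (continuous_abs.measurable.pow_const _).aestronglyMeasurable
  simp [Real.norm_of_nonneg (Real.rpow_nonneg (abs_nonneg t) _)]

theorem LinearMap.exists_linearEquiv_prod_ker {K V W : Type*} [DivisionRing K]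
    [AddCommGroup V] [Module K V] [AddCommGroup W] [Module K W] {L : V →ₗ[K] W}
    (hL : Function.Surjective L) : ∃ M : V ≃ₗ[K] W × ker L, ∀ x, (M x).1 = L x := by
  obtain ⟨T, hT⟩ := (ker L).exists_isCompl
  exact ⟨equivProdOfSurjectiveOfIsCompl L ((ker L).projectionOnto T hT) (range_eq_top.2 hL)
    (Submodule.range_projectionOnto hT) (by rw [Submodule.ker_projectionOnto]; exact hT),
    fun _ ↦ rfl⟩

theorem MeasureTheory.LocallyIntegrable.comp_surjective_linearMap {E F G : Type*}
    [NormedAddCommGroup E] [NormedSpace ℝ E] [FiniteDimensional ℝ E] [MeasurableSpace E]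
    [BorelSpace E] [NormedAddCommGroup F] [NormedSpace ℝ F] [FiniteDimensional ℝ F]
    [MeasurableSpace F] [BorelSpace F] [NormedAddCommGroup G] {ν : Measure F}
    [ν.IsAddHaarMeasure] {g : F → G} (hg : LocallyIntegrable g ν) (μ : Measure E)
    [μ.IsAddHaarMeasure] {L : E →ₗ[ℝ] F} (hL : Function.Surjective L) :
    LocallyIntegrable (fun x ↦ g (L x)) μ := by
  obtain ⟨M, hM⟩ := L.exists_linearEquiv_prod_ker hL
  let M' := M.toContinuousLinearEquiv
  have hmap : μ.map M' = addHaarScalarFactor (μ.map M') (ν.prod addHaar) • ν.prod addHaar :=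
    isAddLeftInvariant_eq_smul _ _
  have hfst : LocallyIntegrable (fun p : F × LinearMap.ker L ↦ g p.1) (μ.map M') := by
    rw [hmap]
    exact (hg.comp_fst _).smul_measure ENNReal.coe_ne_top
  simpa [Function.comp_def, M', hM] using
    (locallyIntegrable_map_homeomorph M'.toHomeomorph).1 hfst

/-- Given nonzero linear functionals `α₁, …, α_m` on `ℝˡ`, there is
`ε > 0` such that for all exponents `0 ≤ κⱼ < ε` the function
`x ↦ ∏ⱼ |αⱼ(x)|^{−κⱼ}` is locally integrable on `ℝˡ` for Lebesgue measure. -/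
theorem statement11 (l m : ℕ) (α : Fin m → ((Fin l → ℝ) →ₗ[ℝ] ℝ))
    (hα : ∀ j, α j ≠ 0) :
    ∃ ε : ℝ, 0 < ε ∧ ∀ κ : Fin m → ℝ, (∀ j, 0 ≤ κ j) → (∀ j, κ j < ε) →
      LocallyIntegrable (fun x : Fin l → ℝ => ∏ j, |α j x| ^ (-(κ j)))
        (volume : Measure (Fin l → ℝ)) := by
  rcases Nat.eq_zero_or_pos m with rfl | hm
  · exact ⟨1, one_pos, fun κ _ _ ↦ by simpa using locallyIntegrable_const (1 : ℝ)⟩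
  have hm' : (0 : ℝ) < m := Nat.cast_pos.2 hm
  refine ⟨(m : ℝ)⁻¹, inv_pos.2 hm', fun κ _ hκ ↦ ?_⟩
  have hfactor (j : Fin m) :
      LocallyIntegrable (fun x ↦ |α j x| ^ (-(m * κ j))) (volume : Measure (Fin l → ℝ)) :=
    (locallyIntegrable_abs_rpow_neg ((lt_inv_mul_iff₀ hm').1 (by simpa using hκ j))
      ).comp_surjective_linearMap _ (LinearMap.surjective_of_ne_zero (hα j))
  have hprod := LocallyIntegrable.prod_rpow_of_sum_eq_one (w := fun _ ↦ (m : ℝ)⁻¹)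
    (fun _ ↦ inv_nonneg.2 hm'.le) (by simp [hm'.ne'])
    (fun _ _ ↦ Real.rpow_nonneg (abs_nonneg _) _) hfactor
  refine hprod.congr (ae_of_all _ fun x ↦ Finset.prod_congr rfl fun j _ ↦ ?_)
  rw [← Real.rpow_mul (abs_nonneg _)]
  field_simp
end

section
/- Let α₁, …, α_m be nonzero real linear functionals on ℝˡ, let δ(x) = ∏_{j=1}^m α_j(x), let Ω = {x ∈ ℝˡ : δ(x) ≠ 0}, and let E be a normed vector space. Suppose K : Ω → E is continuous, positively homogeneous in norm of some degree d ∈ ℝ, meaning ‖K(t x)‖ = t^d·‖K(x)‖ for all real t > 0 and x ∈ Ω, and satisfies ‖K(x)‖ ≤ M·∏_{j=1}^m |α_j(x)|^{−κ_j} for all x ∈ Ω with ‖x‖ = 1, for some constants M > 0 and κ₁, …, κ_m ≥ 0. Then there exists an integer N ≥ 0 such that the function equal to δ(x)^N·K(x) for x ∈ Ω and equal to 0 for x ∈ ℝˡ∖Ω is continuous on all of ℝˡ. -/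
/-!
On the unit sphere the bound controls `K` by `∏ⱼ |αⱼ|^{-κⱼ}`, and homogeneity transports this to
`‖K y‖ ≤ M ‖y‖^{d + ∑κ} ∏ⱼ |αⱼ y|^{-κⱼ}` on `Ω \ {0}`. Multiplying by `δ^N` with `N ≥ κⱼ + 1`
leaves every factor `|αⱼ y|` with exponent at least one; keeping one power of each and bounding
the rest by `‖αⱼ‖ ‖y‖` gives `‖δ(y)^N K(y)‖ ≤ C ‖y‖^e |δ(y)|`. For `N` large the exponent `e` is
nonnegative, so the right-hand side is continuous on `ℝˡ` and vanishes off `Ω`, which squeezes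
`δ^N K` to zero at the hyperplanes. (For `m = 0` there are no hyperplanes and `Ω` is everything.)
-/

open Filter Finset

theorem continuous_indicator_of_norm_le {X E : Type*} [TopologicalSpace X]
    [SeminormedAddGroup E] {U : Set X} {f : X → E} {g : X → ℝ} (hU : IsOpen U)
    (hf : ContinuousOn f U) (hg : Continuous g) (hfg : ∀ x ∈ U, ‖f x‖ ≤ g x)
    (hgU : ∀ x ∉ U, g x = 0) : Continuous (U.indicator f) := by
  refine continuous_iff_continuousAt.2 fun x => ?_
  by_cases hx : x ∈ U
  · exact (hf.continuousAt (hU.mem_nhds hx)).congr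
      (eventuallyEq_of_mem (hU.mem_nhds hx) fun y hy => (Set.indicator_of_mem hy f).symm)
  · have hbound : ∀ y, ‖U.indicator f y‖ ≤ g y := fun y => by
      by_cases hy : y ∈ U
      · simpa [Set.indicator_of_mem hy] using hfg y hy
      · simp [Set.indicator_of_notMem hy, hgU y hy]
    rw [ContinuousAt, Set.indicator_of_notMem hx]
    exact squeeze_zero_norm hbound (hgU x hx ▸ hg.tendsto x)

theorem abs_pow_mul_rpow_neg_le {a b κ : ℝ} {N : ℕ} (ha : a ≠ 0) (hab : |a| ≤ b)
    (hN : κ + 1 ≤ N) : |a| ^ N * |a| ^ (-κ) ≤ b ^ ((N : ℝ) - 1 - κ) * |a| := by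
  have h0 : 0 < |a| := abs_pos.2 ha
  calc |a| ^ N * |a| ^ (-κ) = |a| ^ ((N : ℝ) - 1 - κ) * |a| := by
        rw [← Real.rpow_natCast, ← Real.rpow_add h0, ← Real.rpow_add_one h0.ne']
        ring_nf
    _ ≤ b ^ ((N : ℝ) - 1 - κ) * |a| := by gcongr; linarith

section Arrangement

variable {V E ι : Type*} [NormedAddCommGroup V] [NormedSpace ℝ V] [Fintype ι]
  (α : ι → V →L[ℝ] ℝ)

theorem norm_le_of_homogeneous_of_le_on_sphere [Norm E] {K : V → E} {d M : ℝ} {κ : ι → ℝ}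
    (hhom : ∀ t : ℝ, 0 < t → ∀ x : V, ∏ j, α j x ≠ 0 → ‖K (t • x)‖ = t ^ d * ‖K x‖)
    (hbound : ∀ x : V, ∏ j, α j x ≠ 0 → ‖x‖ = 1 → ‖K x‖ ≤ M * ∏ j, |α j x| ^ (-(κ j)))
    {y : V} (hy : ∏ j, α j y ≠ 0) (hy0 : y ≠ 0) :
    ‖K y‖ ≤ M * ‖y‖ ^ (d + ∑ j, κ j) * ∏ j, |α j y| ^ (-(κ j)) := by
  set t := ‖y‖
  have ht : 0 < t := norm_pos_iff.2 hy0
  set u := t⁻¹ • y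
  have hαu : ∀ j, α j u = t⁻¹ * α j y := fun j => by simp [u]
  have hu : ∏ j, α j u ≠ 0 := by
    simp only [hαu, prod_mul_distrib, prod_const]
    exact mul_ne_zero (pow_ne_zero _ (inv_ne_zero ht.ne')) hy
  have hsphere : ∏ j, |α j u| ^ (-(κ j)) = t ^ (∑ j, κ j) * ∏ j, |α j y| ^ (-(κ j)) := by
    rw [Real.rpow_sum_of_pos ht, ← prod_mul_distrib]
    refine prod_congr rfl fun j _ => ?_
    rw [hαu, abs_mul, abs_inv, abs_of_pos ht, Real.mul_rpow (by positivity) (abs_nonneg _),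
      Real.inv_rpow ht.le, Real.rpow_neg ht.le, inv_inv]
  calc ‖K y‖ = t ^ d * ‖K u‖ := by rw [← hhom t ht u hu, smul_inv_smul₀ ht.ne']
    _ ≤ t ^ d * (M * ∏ j, |α j u| ^ (-(κ j))) := by
        gcongr
        exact hbound u hu (norm_smul_inv_norm hy0)
    _ = M * t ^ (d + ∑ j, κ j) * ∏ j, |α j y| ^ (-(κ j)) := by
        rw [hsphere, Real.rpow_add ht]
        ring

theorem prod_abs_pow_mul_rpow_neg_le {κ : ι → ℝ} {N : ℕ} (hN : ∀ j, κ j + 1 ≤ N) {y : V}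
    (hy : ∏ j, α j y ≠ 0) :
    ∏ j, |α j y| ^ N * |α j y| ^ (-(κ j)) ≤
      (∏ j, ‖α j‖ ^ ((N : ℝ) - 1 - κ j)) * ‖y‖ ^ (∑ j, ((N : ℝ) - 1 - κ j)) *
        |∏ j, α j y| := by
  have hαy : ∀ j, α j y ≠ 0 := fun j => prod_ne_zero_iff.1 hy j (mem_univ j)
  calc ∏ j, |α j y| ^ N * |α j y| ^ (-(κ j))
      ≤ ∏ j, (‖α j‖ * ‖y‖) ^ ((N : ℝ) - 1 - κ j) * |α j y| :=
        prod_le_prod (fun j _ => by positivity) fun j _ =>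
          abs_pow_mul_rpow_neg_le (hαy j) ((α j).le_opNorm y) (hN j)
    _ = _ := by
        simp only [Real.mul_rpow (norm_nonneg _) (norm_nonneg _), prod_mul_distrib, abs_prod]
        rw [Real.rpow_sum_of_nonneg (norm_nonneg y) fun j _ => by linarith [hN j]]

theorem norm_prod_pow_smul_le [Nonempty ι] [NormedAddCommGroup E] [NormedSpace ℝ E]
    {K : V → E} {d M : ℝ} {κ : ι → ℝ}
    (hhom : ∀ t : ℝ, 0 < t → ∀ x : V, ∏ j, α j x ≠ 0 → ‖K (t • x)‖ = t ^ d * ‖K x‖)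
    (hbound : ∀ x : V, ∏ j, α j x ≠ 0 → ‖x‖ = 1 → ‖K x‖ ≤ M * ∏ j, |α j x| ^ (-(κ j)))
    (hM : 0 ≤ M) {N : ℕ} (hN : ∀ j, κ j + 1 ≤ N) {y : V} (hy : ∏ j, α j y ≠ 0) :
    ‖(∏ j, α j y) ^ N • K y‖ ≤
      M * (∏ j, ‖α j‖ ^ ((N : ℝ) - 1 - κ j)) *
        ‖y‖ ^ (d + Fintype.card ι * ((N : ℝ) - 1)) * |∏ j, α j y| := by
  have hy0 : y ≠ 0 := by
    rintro rfl
    simp at hy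
  have hexp : d + ∑ j, κ j + ∑ j, ((N : ℝ) - 1 - κ j) = d + Fintype.card ι * ((N : ℝ) - 1) := by
    simp only [sum_sub_distrib, sum_const, card_univ, nsmul_eq_mul]
    ring
  calc ‖(∏ j, α j y) ^ N • K y‖ = (∏ j, |α j y| ^ N) * ‖K y‖ := by
        rw [norm_smul, norm_pow, Real.norm_eq_abs, abs_prod, prod_pow]
    _ ≤ (∏ j, |α j y| ^ N) * (M * ‖y‖ ^ (d + ∑ j, κ j) * ∏ j, |α j y| ^ (-(κ j))) := by
        gcongr
        exact norm_le_of_homogeneous_of_le_on_sphere α hhom hbound hy hy0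
    _ = M * ‖y‖ ^ (d + ∑ j, κ j) * ∏ j, |α j y| ^ N * |α j y| ^ (-(κ j)) := by
        rw [prod_mul_distrib]
        ring
    _ ≤ M * ‖y‖ ^ (d + ∑ j, κ j) * ((∏ j, ‖α j‖ ^ ((N : ℝ) - 1 - κ j)) *
          ‖y‖ ^ (∑ j, ((N : ℝ) - 1 - κ j)) * |∏ j, α j y|) := by
        gcongr
        exact prod_abs_pow_mul_rpow_neg_le α hN hy
    _ = _ := by
        rw [← hexp, Real.rpow_add (norm_pos_iff.2 hy0) (d + ∑ j, κ j)]
        ring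

end Arrangement

theorem statement12_general (l m : ℕ) {E : Type*} [NormedAddCommGroup E] [NormedSpace ℝ E]
    (α : Fin m → ((Fin l → ℝ) →ₗ[ℝ] ℝ))
    (K : (Fin l → ℝ) → E) (d : ℝ)
    (hcont : ContinuousOn K {x : Fin l → ℝ | (∏ j, α j x) ≠ 0})
    (hhom : ∀ t : ℝ, 0 < t → ∀ x : Fin l → ℝ, (∏ j, α j x) ≠ 0 →
      ‖K (t • x)‖ = t ^ d * ‖K x‖)
    (M : ℝ) (hM : 0 < M) (κ : Fin m → ℝ) (hκ : ∀ j, 0 ≤ κ j)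
    (hbound : ∀ x : Fin l → ℝ, (∏ j, α j x) ≠ 0 → ‖x‖ = 1 →
      ‖K x‖ ≤ M * ∏ j, |α j x| ^ (-(κ j))) :
    ∃ N : ℕ, Continuous
      (Set.indicator {x : Fin l → ℝ | (∏ j, α j x) ≠ 0}
        (fun x => (∏ j, α j x) ^ N • K x)) := by
  rcases isEmpty_or_nonempty (Fin m) with hm | hm
  · refine ⟨0, ?_⟩
    simp only [univ_eq_empty, prod_empty, ne_eq, one_ne_zero, not_false_eq_true,
      Set.ofPred_true, continuousOn_univ] at hcont ⊢
    simpa using hcont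
  let A : Fin m → (Fin l → ℝ) →L[ℝ] ℝ := fun j => (α j).toContinuousLinearMap
  have hδ : Continuous fun x => ∏ j, A j x := continuous_finsetProd _ fun j _ => (A j).continuous
  obtain ⟨N, hN⟩ := exists_nat_ge (∑ j, κ j + |d| + 1)
  have hκN : ∀ j, κ j + 1 ≤ N := fun j => by
    linarith [single_le_sum (fun i _ => hκ i) (mem_univ j), abs_nonneg d]
  have he : 0 ≤ d + Fintype.card (Fin m) * ((N : ℝ) - 1) := by
    have hN1 : |d| ≤ (N : ℝ) - 1 := by linarith [sum_nonneg fun j (_ : j ∈ univ) => hκ j]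
    have hm1 : (1 : ℝ) ≤ Fintype.card (Fin m) := by exact_mod_cast Fintype.card_pos
    nlinarith [neg_abs_le d, abs_nonneg d]
  refine ⟨N, continuous_indicator_of_norm_le (isOpen_ne_fun hδ continuous_const)
    ((hδ.pow N).continuousOn.smul hcont) ?_
    (fun y hy => norm_prod_pow_smul_le A hhom hbound hM.le hκN hy) fun y hy => ?_⟩
  · exact (continuous_const.mul (continuous_norm.rpow_const fun _ => Or.inr he)).mul hδ.abs
  · have hy' : ∏ j, A j y = 0 := not_not.1 hy
    simp [hy']

/-- Let `α₁, …, α_m` be nonzero linear functionals on `ℝˡ`, let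
`δ(x) = ∏ⱼ αⱼ(x)` and `Ω = {x : δ(x) ≠ 0}`.  If `K : Ω → E` is continuous, positively
homogeneous in norm of degree `d`, and bounded on the unit sphere inside `Ω` by
`M·∏ⱼ |αⱼ(x)|^{−κⱼ}` with `M > 0` and `κⱼ ≥ 0`, then for some `N ≥ 0` the function equal
to `δ(x)^N • K(x)` on `Ω` and to `0` off `Ω` is continuous on all of `ℝˡ`. -/
theorem statement12 (l m : ℕ) {E : Type*} [NormedAddCommGroup E] [NormedSpace ℝ E]
    (α : Fin m → ((Fin l → ℝ) →ₗ[ℝ] ℝ)) (hα : ∀ j, α j ≠ 0)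
    (K : (Fin l → ℝ) → E) (d : ℝ)
    (hcont : ContinuousOn K {x : Fin l → ℝ | (∏ j, α j x) ≠ 0})
    (hhom : ∀ t : ℝ, 0 < t → ∀ x : Fin l → ℝ, (∏ j, α j x) ≠ 0 →
      ‖K (t • x)‖ = t ^ d * ‖K x‖)
    (M : ℝ) (hM : 0 < M) (κ : Fin m → ℝ) (hκ : ∀ j, 0 ≤ κ j)
    (hbound : ∀ x : Fin l → ℝ, (∏ j, α j x) ≠ 0 → ‖x‖ = 1 →
      ‖K x‖ ≤ M * ∏ j, |α j x| ^ (-(κ j))) :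
    ∃ N : ℕ, Continuous
      (Set.indicator {x : Fin l → ℝ | (∏ j, α j x) ≠ 0}
        (fun x => (∏ j, α j x) ^ N • K x)) :=
  statement12_general l m α K d hcont hhom M hM κ hκ hbound
end
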